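/- Let 0 < α ≤ 1, let ξ ∈ ℂ with |ξ| = 1, and set g_{ξ,k} = f_{ξ,k}/‖f_{ξ,k}‖_{B_α}. Then for every integer m ≥ 0 and every δ > 0, sup{ |g_{ξ,k}^{(m)}(z)| : z ∈ 𝔻, |z − ξ| ≥ δ } → 0 as k → ∞. -/

import Mathlib

open Metric Set Filter

noncomputable section

/-- The peak function `f_{ξ,k}(z) = ((1 + ξ̄ z)/2)^k`. -/
def peak (ξ : ℂ) (k : ℕ) : ℂ → ℂ := fun z => ((1 + (starRingEnd ℂ) ξ * z) / 2) ^ k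

/-- The Bloch-type norm `‖f‖_{B_α} = |f(0)| + sup_{z∈𝔻} (1-|z|²)^α |f'(z)|`. -/
def blochNorm (α : ℝ) (f : ℂ → ℂ) : ℝ :=
  ‖f 0‖ +
    sSup ((fun z => (1 - ‖z‖ ^ 2) ^ α * ‖deriv f z‖) '' ball (0 : ℂ) 1)

/-- The normalized peak function `g_{ξ,k} = f_{ξ,k} / ‖f_{ξ,k}‖_{B_α}`. -/
def normPeak (α : ℝ) (ξ : ℂ) (k : ℕ) : ℂ → ℂ :=
  fun z => peak ξ k z / ((blochNorm α (peak ξ k) : ℝ) : ℂ)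

end

/-! For `|ξ| = 1` one has `|1 + ξ̄ z| = |z + ξ|`, so `|f_{ξ,k}^{(m)}(z)| ≤ k^m (|z + ξ|/2)^(k-m)`,
and on `{z ∈ 𝔻 : |z - ξ| ≥ δ}` the parallelogram law bounds `|z + ξ|/2` by some `ρ < 1`.
Testing the Bloch seminorm at `z = ρ ξ` gives `‖f_{ξ,k}‖_{B_α} ≥ c ((1 + ρ)/2)^k`, so the
quotient is `O(k^m (2ρ/(1 + ρ))^k)`, which tends to `0`. -/

open ComplexConjugate

theorem iteratedDeriv_peak (ξ : ℂ) (k m : ℕ) (z : ℂ) :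
    iteratedDeriv m (peak ξ k) z =
      k.descFactorial m * (conj ξ / 2) ^ m * ((1 + conj ξ * z) / 2) ^ (k - m) := by
  have hpeak : peak ξ k = fun z => (fun w => (w + 1 / 2) ^ k) (conj ξ / 2 * z) := by
    funext z
    simp only [peak]
    ring
  have hshift : iteratedDeriv m (fun w : ℂ => (w + 1 / 2) ^ k) =
      fun w => iteratedDeriv m (· ^ k) (w + 1 / 2) :=
    iteratedDeriv_comp_add_const m (· ^ k) (1 / 2)
  rw [hpeak, iteratedDeriv_comp_const_mul (f := fun w => (w + 1 / 2) ^ k) (by fun_prop), hshift]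
  simp only [iteratedDeriv_pow]
  ring

theorem norm_one_add_conj_mul {ξ : ℂ} (hξ : ‖ξ‖ = 1) (z : ℂ) :
    ‖1 + conj ξ * z‖ = ‖z + ξ‖ := by
  have hconj : conj ξ * ξ = 1 := by
    rw [Complex.conj_mul', hξ]
    norm_num
  rw [← hconj, ← mul_add, norm_mul, Complex.norm_conj, hξ, one_mul, add_comm]

theorem norm_iteratedDeriv_peak {ξ : ℂ} (hξ : ‖ξ‖ = 1) (k m : ℕ) (z : ℂ) :
    ‖iteratedDeriv m (peak ξ k) z‖ = k.descFactorial m / 2 ^ m * (‖z + ξ‖ / 2) ^ (k - m) := by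
  rw [iteratedDeriv_peak, norm_mul, norm_mul, norm_pow, norm_pow, norm_div, norm_div,
    norm_one_add_conj_mul hξ, Complex.norm_conj, hξ, Complex.norm_natCast, Complex.norm_two,
    div_pow, one_pow, mul_one_div]

theorem norm_iteratedDeriv_peak_le {ξ : ℂ} (hξ : ‖ξ‖ = 1) (k m : ℕ) (z : ℂ) :
    ‖iteratedDeriv m (peak ξ k) z‖ ≤ k ^ m * (‖z + ξ‖ / 2) ^ (k - m) := by
  rw [norm_iteratedDeriv_peak hξ]
  gcongr
  calc (k.descFactorial m : ℝ) / 2 ^ m ≤ k.descFactorial m :=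
        div_le_self (Nat.cast_nonneg _) (one_le_pow₀ one_le_two)
    _ ≤ k ^ m := mod_cast Nat.descFactorial_le_pow k m

theorem norm_deriv_peak_le {ξ : ℂ} (hξ : ‖ξ‖ = 1) (k : ℕ) {z : ℂ} (hz : z ∈ ball (0 : ℂ) 1) :
    ‖deriv (peak ξ k) z‖ ≤ k := by
  have hz' : ‖z + ξ‖ / 2 ≤ 1 := by
    rw [mem_ball_zero_iff] at hz
    linarith [norm_add_le z ξ]
  calc ‖deriv (peak ξ k) z‖ ≤ k ^ 1 * (‖z + ξ‖ / 2) ^ (k - 1) := by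
        simpa only [iteratedDeriv_one] using norm_iteratedDeriv_peak_le hξ k 1 z
    _ ≤ k ^ 1 * 1 := by gcongr; exact pow_le_one₀ (by positivity) hz'
    _ = k := by ring

theorem le_blochNorm {α : ℝ} (hα : 0 ≤ α) {f : ℂ → ℂ} {M : ℝ}
    (hM : ∀ z ∈ ball (0 : ℂ) 1, ‖deriv f z‖ ≤ M) {w : ℂ} (hw : w ∈ ball (0 : ℂ) 1) :
    (1 - ‖w‖ ^ 2) ^ α * ‖deriv f w‖ ≤ blochNorm α f := by
  have hbdd : BddAbove ((fun z => (1 - ‖z‖ ^ 2) ^ α * ‖deriv f z‖) '' ball (0 : ℂ) 1) := by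
    refine ⟨M, ?_⟩
    rintro _ ⟨z, hz, rfl⟩
    have hz1 : ‖z‖ ^ 2 ≤ 1 := pow_le_one₀ (norm_nonneg z) (mem_ball_zero_iff.mp hz).le
    calc (1 - ‖z‖ ^ 2) ^ α * ‖deriv f z‖ ≤ ‖deriv f z‖ :=
          mul_le_of_le_one_left (norm_nonneg _)
            (Real.rpow_le_one (by linarith) (by linarith [sq_nonneg ‖z‖]) hα)
      _ ≤ M := hM z hz
  unfold blochNorm
  linarith [norm_nonneg (f 0), le_csSup hbdd (mem_image_of_mem _ hw)]

theorem blochNorm_peak_ge {α : ℝ} (hα : 0 ≤ α) {ξ : ℂ} (hξ : ‖ξ‖ = 1) {k : ℕ} (hk : 1 ≤ k)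
    {t : ℝ} (ht0 : 0 ≤ t) (ht1 : t < 1) :
    (1 - t ^ 2) ^ α / 2 * ((1 + t) / 2) ^ k ≤ blochNorm α (peak ξ k) := by
  have hw : ‖(t : ℂ) * ξ‖ = t := by
    rw [norm_mul, hξ, mul_one, Complex.norm_real, Real.norm_of_nonneg ht0]
  have hwξ : ‖(t : ℂ) * ξ + ξ‖ = 1 + t := by
    have : (t : ℂ) * ξ + ξ = ((1 + t : ℝ) : ℂ) * ξ := by push_cast; ring
    rw [this, norm_mul, hξ, mul_one, Complex.norm_real, Real.norm_of_nonneg (by linarith)]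
  have hderiv : ‖deriv (peak ξ k) ((t : ℂ) * ξ)‖ = k / 2 * ((1 + t) / 2) ^ (k - 1) := by
    simpa [iteratedDeriv_one, hwξ] using norm_iteratedDeriv_peak hξ k 1 ((t : ℂ) * ξ)
  have hle := le_blochNorm hα (fun z hz => norm_deriv_peak_le hξ k hz)
    (w := (t : ℂ) * ξ) (by rwa [mem_ball_zero_iff, hw])
  rw [hw, hderiv] at hle
  refine le_trans ?_ hle
  have hpow : ((1 + t) / 2) ^ k ≤ ((1 + t) / 2) ^ (k - 1) :=
    pow_le_pow_of_le_one (by linarith) (by linarith) (Nat.sub_le k 1)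
  have hk' : (1 : ℝ) ≤ k := mod_cast hk
  have hr : 0 ≤ (1 - t ^ 2) ^ α := Real.rpow_nonneg (by nlinarith) α
  calc (1 - t ^ 2) ^ α / 2 * ((1 + t) / 2) ^ k
      ≤ (1 - t ^ 2) ^ α / 2 * ((1 + t) / 2) ^ (k - 1) := by gcongr
    _ = (1 - t ^ 2) ^ α * (1 / 2 * ((1 + t) / 2) ^ (k - 1)) := by ring
    _ ≤ (1 - t ^ 2) ^ α * (k / 2 * ((1 + t) / 2) ^ (k - 1)) := by gcongr

theorem exists_half_norm_add_le_of_le_norm_sub {ξ : ℂ} (hξ : ‖ξ‖ = 1) {δ : ℝ} (hδ : 0 < δ) :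
    ∃ ρ, 0 < ρ ∧ ρ < 1 ∧ ∀ z ∈ ball (0 : ℂ) 1, δ ≤ ‖z - ξ‖ → ‖z + ξ‖ / 2 ≤ ρ := by
  refine ⟨max (1 / 2) √(1 - δ ^ 2 / 4), by positivity, max_lt (by norm_num) ?_,
    fun z hz hzξ => le_max_of_le_right (Real.le_sqrt_of_sq_le ?_)⟩
  · rw [Real.sqrt_lt' one_pos]
    nlinarith
  · have hpar := parallelogram_law_with_norm ℝ z ξ
    have hz1 : ‖z‖ < 1 := mem_ball_zero_iff.mp hz
    rw [hξ] at hpar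
    nlinarith [norm_nonneg z, mul_self_le_mul_self hδ.le hzξ]

theorem norm_iteratedDeriv_normPeak_le {α : ℝ} (hα : 0 ≤ α) {ξ : ℂ} (hξ : ‖ξ‖ = 1) {ρ : ℝ}
    (hρ0 : 0 < ρ) (hρ1 : ρ < 1) {m k : ℕ} (hmk : m ≤ k) (hk : 1 ≤ k) {z : ℂ}
    (hz : ‖z + ξ‖ / 2 ≤ ρ) :
    ‖iteratedDeriv m (normPeak α ξ k) z‖ ≤
      2 / ((1 - ρ ^ 2) ^ α * ρ ^ m) * (k ^ m * (2 * ρ / (1 + ρ)) ^ k) := by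
  have hB := blochNorm_peak_ge hα hξ hk hρ0.le hρ1
  have hr : 0 < (1 - ρ ^ 2) ^ α := Real.rpow_pos_of_pos (by nlinarith) α
  have hc : 0 < (1 - ρ ^ 2) ^ α / 2 * ((1 + ρ) / 2) ^ k := by positivity
  have hnum : ‖iteratedDeriv m (peak ξ k) z‖ ≤ k ^ m * (ρ ^ k / ρ ^ m) := by
    rw [div_eq_mul_inv, ← pow_sub₀ ρ hρ0.ne' hmk]
    exact (norm_iteratedDeriv_peak_le hξ k m z).trans (by gcongr)
  calc ‖iteratedDeriv m (normPeak α ξ k) z‖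
      = ‖iteratedDeriv m (peak ξ k) z‖ / blochNorm α (peak ξ k) := by
        rw [show normPeak α ξ k = (peak ξ k · / (blochNorm α (peak ξ k) : ℂ)) from rfl,
          iteratedDeriv_div_const, norm_div, Complex.norm_real,
          Real.norm_of_nonneg (hc.le.trans hB)]
    _ ≤ k ^ m * (ρ ^ k / ρ ^ m) / ((1 - ρ ^ 2) ^ α / 2 * ((1 + ρ) / 2) ^ k) :=
        div_le_div₀ (by positivity) hnum hc hB
    _ = 2 / ((1 - ρ ^ 2) ^ α * ρ ^ m) * (k ^ m * (2 * ρ / (1 + ρ)) ^ k) := by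
        rw [div_pow, div_pow, mul_pow]
        field_simp

theorem stmt_12_general (α : ℝ) (hα0 : 0 < α) (ξ : ℂ) (hξ : ‖ξ‖ = 1)
    (m : ℕ) (δ : ℝ) (hδ : 0 < δ) :
    Tendsto
      (fun k : ℕ =>
        sSup ((fun z => ‖iteratedDeriv m (normPeak α ξ k) z‖) ''
          {z : ℂ | z ∈ ball (0 : ℂ) 1 ∧ δ ≤ ‖z - ξ‖}))
      atTop (nhds 0) := by
  obtain ⟨ρ, hρ0, hρ1, hρ⟩ := exists_half_norm_add_le_of_le_norm_sub hξ hδ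
  set C := 2 / ((1 - ρ ^ 2) ^ α * ρ ^ m)
  have hC : 0 ≤ C := by
    have : 0 < (1 - ρ ^ 2) ^ α := Real.rpow_pos_of_pos (by nlinarith) α
    positivity
  have hq1 : 2 * ρ / (1 + ρ) < 1 := by
    rw [div_lt_one (by linarith)]
    linarith
  have hlim : Tendsto (fun k : ℕ => C * (k ^ m * (2 * ρ / (1 + ρ)) ^ k)) atTop (nhds 0) := by
    simpa using (tendsto_pow_const_mul_const_pow_of_lt_one m (by positivity) hq1).const_mul C
  refine tendsto_of_tendsto_of_tendsto_of_le_of_le' tendsto_const_nhds hlim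
    (Eventually.of_forall fun k => Real.sSup_nonneg ?_) ?_
  · rintro _ ⟨z, -, rfl⟩
    exact norm_nonneg _
  · filter_upwards [eventually_ge_atTop (max m 1)] with k hk
    refine Real.sSup_le ?_ (by positivity)
    rintro _ ⟨z, ⟨hz, hzξ⟩, rfl⟩
    exact norm_iteratedDeriv_normPeak_le hα0.le hξ hρ0 hρ1 (le_of_max_le_left hk)
      (le_of_max_le_right hk) (hρ z hz hzξ)

/-- For `0 < α ≤ 1`, `|ξ| = 1`, every `m ≥ 0` and every `δ > 0`,
`sup{ |g_{ξ,k}^{(m)}(z)| : z ∈ 𝔻, |z - ξ| ≥ δ } → 0` as `k → ∞`, where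
`g_{ξ,k} = f_{ξ,k}/‖f_{ξ,k}‖_{B_α}` is the normalized peak function. -/
theorem stmt_12 (α : ℝ) (hα0 : 0 < α) (hα1 : α ≤ 1) (ξ : ℂ) (hξ : ‖ξ‖ = 1)
    (m : ℕ) (δ : ℝ) (hδ : 0 < δ) :
    Tendsto
      (fun k : ℕ =>
        sSup ((fun z => ‖iteratedDeriv m (normPeak α ξ k) z‖) ''
          {z : ℂ | z ∈ ball (0 : ℂ) 1 ∧ δ ≤ ‖z - ξ‖}))
      atTop (nhds 0) :=
  stmt_12_general α hα0 ξ hξ m δ hδ
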